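/- Let $b \in \mathbb{R}^n$ with all entries strictly positive, and let $\kappa = \max_i b_i / \min_i b_i$. Suppose $X \succeq 0$ with $\sum_i |X_{ii} - b_i| \le \delta$. Then there exists $X' \succeq 0$ with $X'_{ii} = b_i$ for all $i$ such that for every symmetric $A$, $\mathrm{Tr}[A(X - X')] \le 3\kappa\delta \|A\|_\infty$. -/

import Mathlib

/-!
Rescaling by `D = diag (√b)` reduces to the case `b = 1`. There, every row and column `i` with
`Xᵢᵢ > 1` is shrunk by `1 / √Xᵢᵢ`, and the diagonal matrix `diag (max 0 (1 - Xᵢᵢ))` is added to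
lift the remaining diagonal entries to `1`; both steps preserve positive semidefiniteness. Since
`|Xᵢⱼ| ≤ √(Xᵢᵢ Xⱼⱼ)`, each of the two corrections has `(i, j)` entry at most
`(|Xᵢᵢ - 1| + |Xⱼⱼ - 1|) / 2`, so against a symmetric `A` each costs at most `δ ‖A‖∞`. In the
rescaled problem the diagonal error is at most `δ / min b` and `‖D A D‖∞ ≤ max b ‖A‖∞`, which gives
the bound `2 κ δ ‖A‖∞`.
-/

open Matrix

lemma one_sub_inv_max_mul_inv_max_mul_le {u v : ℝ} (hu : 0 ≤ u) (hv : 0 ≤ v) :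
    (1 - (max 1 u)⁻¹ * (max 1 v)⁻¹) * (u * v) ≤ (|u ^ 2 - 1| + |v ^ 2 - 1|) / 2 := by
  have hmixed : ∀ {u v : ℝ}, 0 ≤ u → u ≤ 1 → 1 ≤ v →
      (1 - (max 1 u)⁻¹ * (max 1 v)⁻¹) * (u * v) ≤ (|u ^ 2 - 1| + |v ^ 2 - 1|) / 2 := by
    intro u v hu hu1 hv1
    rw [max_eq_left hu1, max_eq_right hv1, abs_of_nonpos (by nlinarith),
      abs_of_nonneg (by nlinarith)]
    have : (1 - 1⁻¹ * v⁻¹) * (u * v) = u * (v - 1) := by field_simp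
    nlinarith
  rcases le_total u 1 with hu1 | hu1 <;> rcases le_total v 1 with hv1 | hv1
  · rw [max_eq_left hu1, max_eq_left hv1]
    simp only [inv_one, mul_one, sub_self, zero_mul]
    positivity
  · exact hmixed hu hu1 hv1
  · rw [mul_comm (max 1 u)⁻¹, mul_comm u, add_comm]
    exact hmixed hv hv1 hu1
  · rw [max_eq_right hu1, max_eq_right hv1, abs_of_nonneg (by nlinarith),
      abs_of_nonneg (by nlinarith)]
    have : (1 - u⁻¹ * v⁻¹) * (u * v) = u * v - 1 := by field_simp
    nlinarith [sq_nonneg (u - v)]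

namespace Matrix

variable {ι : Type*}

lemma PosSemidef.apply_mul_self_le {X : Matrix ι ι ℝ} (hX : X.PosSemidef) (i j : ι) :
    X i j * X i j ≤ X i i * X j j := by
  have hdet := (hX.submatrix ![i, j]).det_nonneg
  have hsymm : X j i = X i j := by simpa using hX.isHermitian.apply i j
  simp only [det_fin_two, submatrix_apply, Matrix.cons_val_zero, Matrix.cons_val_one,
    hsymm] at hdet
  linarith

lemma PosSemidef.abs_apply_le {X : Matrix ι ι ℝ} (hX : X.PosSemidef) (i j : ι) :
    |X i j| ≤ √(X i i) * √(X j j) := by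
  rw [← Real.sqrt_mul hX.diag_nonneg]
  exact Real.abs_le_sqrt (by simpa [sq] using hX.apply_mul_self_le i j)

noncomputable def unitDiagScale (X : Matrix ι ι ℝ) (i : ι) : ℝ := (max 1 √(X i i))⁻¹

lemma unitDiagScale_nonneg (X : Matrix ι ι ℝ) (i : ι) : 0 ≤ unitDiagScale X i :=
  inv_nonneg.mpr (zero_le_one.trans (le_max_left _ _))

lemma unitDiagScale_le_one (X : Matrix ι ι ℝ) (i : ι) : unitDiagScale X i ≤ 1 :=
  inv_le_one_of_one_le₀ (le_max_left _ _)

variable [Fintype ι]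

lemma trace_mul_le_of_abs_apply_le {A E : Matrix ι ι ℝ} (hA : A.IsHermitian) {N : ℝ}
    (hN : ∀ j, ∑ i, |A i j| ≤ N) {d : ι → ℝ} (hE : ∀ i j, |E i j| ≤ (d i + d j) / 2) :
    (A * E).trace ≤ N * ∑ i, d i := by
  have hd : ∀ i, 0 ≤ d i := fun i => by linarith [hE i i, abs_nonneg (E i i)]
  have hcols : ∑ i, ∑ j, |A i j| * d j = ∑ j, (∑ i, |A i j|) * d j := by
    rw [Finset.sum_comm]
    simp only [Finset.sum_mul]
  have hrows : ∑ i, ∑ j, |A i j| * d i = ∑ j, (∑ i, |A i j|) * d j := by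
    refine Finset.sum_congr rfl fun i _ => ?_
    rw [Finset.sum_mul]
    refine Finset.sum_congr rfl fun j _ => ?_
    rw [← hA.apply i j, star_trivial]
  calc (A * E).trace = ∑ i, ∑ j, A i j * E j i := rfl
    _ ≤ ∑ i, ∑ j, (|A i j| * d j + |A i j| * d i) / 2 := by
      refine Finset.sum_le_sum fun i _ => Finset.sum_le_sum fun j _ => ?_
      rw [← mul_add, mul_div_assoc]
      exact (le_abs_self _).trans ((abs_mul _ _).trans_le
        (mul_le_mul_of_nonneg_left (hE j i) (abs_nonneg _)))
    _ = ∑ j, (∑ i, |A i j|) * d j := by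
      simp only [← Finset.sum_div, Finset.sum_add_distrib, hcols, hrows]
      ring
    _ ≤ ∑ j, N * d j := Finset.sum_le_sum fun j _ => mul_le_mul_of_nonneg_right (hN j) (hd j)
    _ = N * ∑ i, d i := by rw [Finset.mul_sum]

variable [DecidableEq ι]

lemma diagonal_mul_mul_diagonal_apply (s : ι → ℝ) (X : Matrix ι ι ℝ) (i j : ι) :
    (diagonal s * X * diagonal s) i j = s i * X i j * s j := by
  rw [mul_diagonal, diagonal_mul]

lemma PosSemidef.diagonal_mul_mul_diagonal {X : Matrix ι ι ℝ} (hX : X.PosSemidef) (s : ι → ℝ) :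
    (diagonal s * X * diagonal s).PosSemidef := by
  simpa using hX.mul_mul_conjTranspose_same (diagonal s)

noncomputable def unitDiagRounding (X : Matrix ι ι ℝ) : Matrix ι ι ℝ :=
  diagonal (unitDiagScale X) * X * diagonal (unitDiagScale X) + diagonal fun i => max 0 (1 - X i i)

lemma posSemidef_unitDiagRounding {X : Matrix ι ι ℝ} (hX : X.PosSemidef) :
    (unitDiagRounding X).PosSemidef :=
  (hX.diagonal_mul_mul_diagonal _).add (.diagonal fun _ => le_max_left _ _)

lemma unitDiagRounding_apply_self (X : Matrix ι ι ℝ) (i : ι) : unitDiagRounding X i i = 1 := by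
  rw [unitDiagRounding, add_apply, diagonal_mul_mul_diagonal_apply, diagonal_apply_eq,
    unitDiagScale]
  rcases le_total (X i i) 1 with h | h
  · rw [max_eq_left (Real.sqrt_le_one.mpr h), max_eq_right (by linarith)]
    ring
  · have hsqrt : 1 ≤ √(X i i) := Real.one_le_sqrt.mpr h
    rw [max_eq_right hsqrt, max_eq_left (by linarith)]
    field_simp
    rw [Real.sq_sqrt (by linarith)]
    ring

lemma abs_sub_diagonal_unitDiagScale_mul_mul_le {X : Matrix ι ι ℝ} (hX : X.PosSemidef)
    (i j : ι) :
    |(X - diagonal (unitDiagScale X) * X * diagonal (unitDiagScale X)) i j|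
      ≤ (|X i i - 1| + |X j j - 1|) / 2 := by
  have hscale : 0 ≤ 1 - unitDiagScale X i * unitDiagScale X j := by
    nlinarith [unitDiagScale_nonneg X i, unitDiagScale_nonneg X j, unitDiagScale_le_one X i,
      unitDiagScale_le_one X j]
  calc |(X - diagonal (unitDiagScale X) * X * diagonal (unitDiagScale X)) i j|
      = (1 - unitDiagScale X i * unitDiagScale X j) * |X i j| := by
        rw [sub_apply, diagonal_mul_mul_diagonal_apply, ← abs_of_nonneg hscale, ← abs_mul]
        ring_nf
    _ ≤ (1 - unitDiagScale X i * unitDiagScale X j) * (√(X i i) * √(X j j)) :=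
        mul_le_mul_of_nonneg_left (hX.abs_apply_le i j) hscale
    _ ≤ (|√(X i i) ^ 2 - 1| + |√(X j j) ^ 2 - 1|) / 2 :=
        one_sub_inv_max_mul_inv_max_mul_le (Real.sqrt_nonneg _) (Real.sqrt_nonneg _)
    _ = (|X i i - 1| + |X j j - 1|) / 2 := by
        rw [Real.sq_sqrt hX.diag_nonneg, Real.sq_sqrt hX.diag_nonneg]

theorem trace_mul_sub_unitDiagRounding_le {X A : Matrix ι ι ℝ} (hX : X.PosSemidef)
    (hA : A.IsHermitian) {N : ℝ} (hN : ∀ j, ∑ i, |A i j| ≤ N) :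
    (A * (X - unitDiagRounding X)).trace ≤ 2 * N * ∑ i, |X i i - 1| := by
  have hsplit : X - unitDiagRounding X =
      (X - diagonal (unitDiagScale X) * X * diagonal (unitDiagScale X))
        - diagonal fun i => max 0 (1 - X i i) := by
    rw [unitDiagRounding, sub_add_eq_sub_sub]
  have hneg : ∀ i j, |(-diagonal fun k => max 0 (1 - X k k)) i j|
      ≤ (|X i i - 1| + |X j j - 1|) / 2 := fun i j => by
    rw [neg_apply, abs_neg, diagonal_apply]
    split_ifs with h
    · subst h
      rw [abs_of_nonneg (le_max_left _ _), abs_sub_comm]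
      linarith [max_le (abs_nonneg (1 - X i i)) (le_abs_self (1 - X i i))]
    · rw [abs_zero]
      positivity
  rw [hsplit, sub_eq_add_neg, Matrix.mul_add, trace_add]
  linarith [trace_mul_le_of_abs_apply_le hA hN (abs_sub_diagonal_unitDiagScale_mul_mul_le hX),
    trace_mul_le_of_abs_apply_le hA hN hneg]

noncomputable def diagRounding (b : ι → ℝ) (X : Matrix ι ι ℝ) : Matrix ι ι ℝ :=
  diagonal (fun i => √(b i)) *
    unitDiagRounding (diagonal (fun i => (√(b i))⁻¹) * X * diagonal (fun i => (√(b i))⁻¹)) *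
      diagonal (fun i => √(b i))

lemma posSemidef_diagRounding {X : Matrix ι ι ℝ} (hX : X.PosSemidef) (b : ι → ℝ) :
    (diagRounding b X).PosSemidef :=
  (posSemidef_unitDiagRounding (hX.diagonal_mul_mul_diagonal _)).diagonal_mul_mul_diagonal _

lemma diagRounding_apply_self {b : ι → ℝ} (hb : ∀ i, 0 ≤ b i) (X : Matrix ι ι ℝ) (i : ι) :
    diagRounding b X i i = b i := by
  rw [diagRounding, diagonal_mul_mul_diagonal_apply, unitDiagRounding_apply_self, mul_one,
    Real.mul_self_sqrt (hb i)]

theorem trace_mul_sub_diagRounding_le {b : ι → ℝ} (hb : ∀ i, 0 < b i) {X A : Matrix ι ι ℝ}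
    (hX : X.PosSemidef) (hA : A.IsHermitian) {N : ℝ} (hN : ∀ j, ∑ i, |A i j| ≤ N) {B : ℝ}
    (hB : ∀ i, b i ≤ B) :
    (A * (X - diagRounding b X)).trace ≤ 2 * (B * N) * ∑ i, |X i i - b i| / b i := by
  rw [diagRounding]
  set D := diagonal fun i => √(b i)
  set Y := diagonal (fun i => (√(b i))⁻¹) * X * diagonal (fun i => (√(b i))⁻¹) with hY
  have hsqrt : ∀ i, √(b i) ≠ 0 := fun i => (Real.sqrt_pos.mpr (hb i)).ne'
  have hXY : X = D * Y * D := by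
    ext i j
    rw [hY, diagonal_mul_mul_diagonal_apply, diagonal_mul_mul_diagonal_apply]
    field_simp [hsqrt i, hsqrt j]
  have hYdiag : ∀ i, |Y i i - 1| = |X i i - b i| / b i := fun i => by
    have hYii : Y i i = X i i / b i := by
      rw [hY, diagonal_mul_mul_diagonal_apply]
      field_simp
      rw [Real.sq_sqrt (hb i).le]
    rw [hYii, div_sub_one (hb i).ne', abs_div, abs_of_pos (hb i)]
  have hDAD : (D * A * D).IsHermitian := by
    simpa [D] using isHermitian_conjTranspose_mul_mul D hA
  have hDAD_cols : ∀ j, ∑ i, |(D * A * D) i j| ≤ B * N := fun j => by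
    have hB0 : 0 ≤ B := (hb j).le.trans (hB j)
    calc ∑ i, |(D * A * D) i j| = ∑ i, √(b i) * |A i j| * √(b j) := by
          refine Finset.sum_congr rfl fun i _ => ?_
          rw [diagonal_mul_mul_diagonal_apply, abs_mul, abs_mul, abs_of_nonneg (Real.sqrt_nonneg _),
            abs_of_nonneg (Real.sqrt_nonneg _)]
      _ ≤ ∑ i, √B * |A i j| * √B := by
          gcongr with i
          exacts [hB i, hB j]
      _ = B * ∑ i, |A i j| := by
          rw [Finset.mul_sum]
          refine Finset.sum_congr rfl fun i _ => ?_
          rw [mul_right_comm, Real.mul_self_sqrt hB0]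
      _ ≤ B * N := mul_le_mul_of_nonneg_left (hN j) hB0
  calc (A * (X - D * unitDiagRounding Y * D)).trace
        = ((D * A * D) * (Y - unitDiagRounding Y)).trace := by
        conv_lhs => rw [hXY, ← Matrix.sub_mul, ← Matrix.mul_sub]
        rw [← Matrix.mul_assoc, ← Matrix.mul_assoc, trace_mul_comm, ← Matrix.mul_assoc,
          ← Matrix.mul_assoc]
    _ ≤ 2 * (B * N) * ∑ i, |Y i i - 1| :=
        trace_mul_sub_unitDiagRounding_le (hX.diagonal_mul_mul_diagonal _) hDAD hDAD_cols
    _ = 2 * (B * N) * ∑ i, |X i i - b i| / b i := by simp only [hYdiag]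

end Matrix

theorem stmt11_general {n : ℕ} (b : Fin n → ℝ) (hb : ∀ i, 0 < b i)
    (X : Matrix (Fin n) (Fin n) ℝ) (δ : ℝ)
    (hX : X.PosSemidef) (hdiag : ∑ i, |X i i - b i| ≤ δ) :
    ∃ X' : Matrix (Fin n) (Fin n) ℝ, X'.PosSemidef ∧ (∀ i, X' i i = b i) ∧
      ∀ A : Matrix (Fin n) (Fin n) ℝ, A.IsHermitian →
        (A * (X - X')).trace ≤
          3 * ((⨆ i, b i) / (⨅ i, b i)) * δ * (⨆ j, ∑ i, |A i j|) := by
  rcases isEmpty_or_nonempty (Fin n) with _ | _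
  · exact ⟨0, .zero, isEmptyElim, fun A _ => by simp⟩
  refine ⟨diagRounding b X, posSemidef_diagRounding hX b,
    diagRounding_apply_self (fun i => (hb i).le) X, fun A hA => ?_⟩
  obtain ⟨i₀, hi₀⟩ := exists_eq_ciInf_of_finite (f := b)
  set m := ⨅ i, b i
  set B := ⨆ i, b i
  set N := ⨆ j, ∑ i, |A i j|
  have hm : 0 < m := hi₀ ▸ hb i₀
  have hmb : ∀ i, m ≤ b i := ciInf_le (Finite.bddBelow_range b)
  have hbB : ∀ i, b i ≤ B := le_ciSup (Finite.bddAbove_range b)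
  have hB : 0 ≤ B := (hb i₀).le.trans (hbB i₀)
  have hκ : 0 ≤ B / m := div_nonneg hB hm.le
  have hN : 0 ≤ N := Real.iSup_nonneg fun j => Finset.sum_nonneg fun i _ => abs_nonneg _
  calc (A * (X - diagRounding b X)).trace
      ≤ 2 * (B * N) * ∑ i, |X i i - b i| / b i :=
        trace_mul_sub_diagRounding_le hb hX hA (le_ciSup (Finite.bddAbove_range _)) hbB
    _ ≤ 2 * (B * N) * ∑ i, |X i i - b i| / m := by gcongr with i; exact hmb i
    _ = 2 * (B / m) * (∑ i, |X i i - b i|) * N := by rw [← Finset.sum_div]; ring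
    _ ≤ 3 * (B / m) * δ * N := by gcongr; norm_num

theorem stmt11 {n : ℕ} (hn : 0 < n) (b : Fin n → ℝ) (hb : ∀ i, 0 < b i)
    (X : Matrix (Fin n) (Fin n) ℝ) (δ : ℝ)
    (hX : X.PosSemidef) (hdiag : ∑ i, |X i i - b i| ≤ δ) :
    ∃ X' : Matrix (Fin n) (Fin n) ℝ, X'.PosSemidef ∧ (∀ i, X' i i = b i) ∧
      ∀ A : Matrix (Fin n) (Fin n) ℝ, A.IsHermitian →
        (A * (X - X')).trace ≤
          3 * ((⨆ i, b i) / (⨅ i, b i)) * δ * (⨆ j, ∑ i, |A i j|) :=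
  stmt11_general b hb X δ hX hdiag
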